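/- arXiv:2206.12532 — 4 statements merged into one kernel-verified Lean document; each statement's English description precedes it below -/
import Mathlib

section
/- If a causal score function θ has a valid effect ordering interpretation with respect to a causal effect function β over a finite set of feature values (i.e., θ(x_i) > θ(x_j) if and only if β(x_i) > β(x_j) for all i, j), then for every threshold τ there exists a threshold τ̃ such that θ(x) > τ̃ if and only if β(x) > τ, for all feature values x in the set. -/
/-! Under effect ordering, the set `{x | β x > τ}` is upward closed along `θ`. On a finite set every
such set is a strict superlevel set of `θ`: cut at the largest `θ`-value outside it, or below all
values of `θ` when it is everything. -/

theorem Finite.exists_lt_iff_mem_of_upward_closed {X α : Type*} [Finite X] [LinearOrder α]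
    [Nonempty α] [NoMinOrder α] (f : X → α) (U : Set X)
    (hU : ∀ x y, x ∈ U → f x ≤ f y → y ∈ U) :
    ∃ t : α, ∀ x, t < f x ↔ x ∈ U := by
  by_cases hL : (Uᶜ).Nonempty
  · obtain ⟨z, hzU, hz_max⟩ := Set.exists_max_image Uᶜ f (Set.toFinite _) hL
    refine ⟨f z, fun x => ⟨fun hzx => ?_, fun hx => ?_⟩⟩
    · by_contra hx
      exact (hz_max x hx).not_gt hzx
    · by_contra hxz
      exact hzU (hU x z hx (not_lt.mp hxz))
  · obtain ⟨b, hb⟩ := (Set.toFinite (Set.range f)).bddBelow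
    obtain ⟨t, htb⟩ := exists_lt b
    have hU_univ : ∀ x, x ∈ U := fun x => by
      by_contra hx
      exact hL ⟨x, hx⟩
    exact ⟨t, fun x => iff_of_true (htb.trans_le (hb ⟨x, rfl⟩)) (hU_univ x)⟩

theorem eo_implies_ec_general {X : Type*} [Fintype X] (θ β : X → ℝ)
    (hEO : ∀ xi xj : X, θ xi > θ xj ↔ β xi > β xj) :
    ∀ τ : ℝ, ∃ τt : ℝ, ∀ x : X, θ x > τt ↔ β x > τ := by
  intro τ
  refine Finite.exists_lt_iff_mem_of_upward_closed θ {x | τ < β x} fun x y hx hθ => ?_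
  by_contra hy
  exact hθ.not_gt ((hEO x y).mpr ((not_lt.mp hy).trans_lt hx))

/-- Effect ordering implies effect classification for every threshold. -/
theorem eo_implies_ec {X : Type*} [Fintype X] [Nonempty X] (θ β : X → ℝ)
    (hEO : ∀ xi xj : X, θ xi > θ xj ↔ β xi > β xj) :
    ∀ τ : ℝ, ∃ τt : ℝ, ∀ x : X, θ x > τt ↔ β x > τ :=
  eo_implies_ec_general θ β hEO
end

section
/- For a standard normal variable ε, the variance of the truncated variable Var(ε | ε > −ψ) is a strictly increasing function of ψ, and by symmetry Var(ε | ε ≤ −ψ) = Var(ε | ε > ψ). Consequently, the function D(ψ) = Var(ε | ε > −ψ) − Var(ε | ε ≤ −ψ) satisfies D(0) = 0, D(ψ) > 0 for ψ > 0, and D(ψ) < 0 for ψ < 0. -/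
/-!
Reflection `x ↦ -x` preserves the standard Gaussian, so `Var(ε | ε ≤ -ψ) = Var(ε | ε > ψ)` and
every claim reduces to `V t = Var(ε | ε > t)` being strictly decreasing. With the tail
`Q t = P(ε > t)` and the inverse Mills ratio `m = φ / Q` one has `V = 1 - m (m - t)` and
`m' = m (m - t)`, so, writing `s = √(t² + 8)`,
`V' = -m (2m² - 3tm + t² - 1) = -2m (m - (3t + s)/4) (m - (3t - s)/4)`,
which is negative by Sampford's bound `m > (3t + s)/4`. That bound, and Birnbaum's bound
`Q > φ (√(t² + 4) - t) / 2` used to prove it, hold because the gap between the two sides is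
strictly monotone (the sign of its derivative is an algebraic inequality between square roots)
and tends to `0` at `+∞`.
-/

open MeasureTheory ProbabilityTheory

/-- Conditional mean of a standard normal restricted to a set. -/
noncomputable def gaussCondMean (s : Set ℝ) : ℝ :=
  (∫ x in s, x ∂(gaussianReal 0 1)) / ((gaussianReal 0 1) s).toReal

/-- Conditional variance of a standard normal restricted to a set. -/
noncomputable def gaussCondVar (s : Set ℝ) : ℝ :=
  (∫ x in s, x ^ 2 ∂(gaussianReal 0 1)) / ((gaussianReal 0 1) s).toReal -
    (gaussCondMean s) ^ 2

open Filter Set Topology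
open scoped NNReal

theorem StrictAnti.lt_of_tendsto_atTop {α β : Type*} [LinearOrder α] [NoMaxOrder α]
    [TopologicalSpace β] [Preorder β] [OrderClosedTopology β] {f : α → β} {b : β}
    (hf : StrictAnti f) (h : Tendsto f atTop (𝓝 b)) (x : α) : b < f x := by
  obtain ⟨y, hxy⟩ := exists_gt x
  exact (hf.antitone.le_of_tendsto h y).trans_lt (hf hxy)

theorem integral_Ioi_of_hasDerivAt_of_integrable {E : Type*} [NormedAddCommGroup E]
    [NormedSpace ℝ E] [CompleteSpace E] {f f' : ℝ → E} (hderiv : ∀ x, HasDerivAt f (f' x) x)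
    (hf' : Integrable f') (hf : Integrable f) (a : ℝ) : ∫ x in Ioi a, f' x = -f a := by
  have hlim := tendsto_zero_of_hasDerivAt_of_integrableOn_Ioi (a := a) (fun x _ ↦ hderiv x)
    hf'.integrableOn hf.integrableOn
  simpa using integral_Ioi_of_hasDerivAt_of_tendsto' (fun x _ ↦ hderiv x) hf'.integrableOn hlim

theorem setIntegral_gaussianReal_eq_setIntegral_smul {E : Type*} [NormedAddCommGroup E]
    [NormedSpace ℝ E] {μ : ℝ} {v : ℝ≥0} (hv : v ≠ 0) (s : Set ℝ) (g : ℝ → E) :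
    ∫ x in s, g x ∂gaussianReal μ v = ∫ x in s, gaussianPDFReal μ v x • g x := by
  rw [gaussianReal_of_var_ne_zero μ hv, setIntegral_withDensity_eq_setIntegral_toReal_smul' s
    (measurable_gaussianPDF μ v) (ae_of_all _ fun _ ↦ gaussianPDF_lt_top)]
  simp only [toReal_gaussianPDF]

instance (v : ℝ≥0) : (gaussianReal 0 v).IsNegInvariant :=
  ⟨gaussianReal_map_neg.trans (by rw [neg_zero])⟩

theorem gaussCondVar_neg (s : Set ℝ) : gaussCondVar (-s) = gaussCondVar s := by
  have h (g : ℝ → ℝ) : ∫ x in -s, g (-x) ∂gaussianReal 0 1 = ∫ x in s, g x ∂gaussianReal 0 1 :=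
    (Measure.measurePreserving_neg _).setIntegral_preimage_emb measurableEmbedding_neg g s
  have h1 : ∫ x in -s, x ∂gaussianReal 0 1 = -∫ x in s, x ∂gaussianReal 0 1 := by
    rw [← integral_neg]
    simpa using h (fun x ↦ -x)
  have h2 : ∫ x in -s, x ^ 2 ∂gaussianReal 0 1 = ∫ x in s, x ^ 2 ∂gaussianReal 0 1 := by
    have := h (fun x ↦ x ^ 2)
    simp only [neg_sq] at this
    exact this
  simp only [gaussCondVar, gaussCondMean, Measure.measure_neg, h1, h2, neg_div, neg_sq]

theorem gaussCondVar_congr_ae {s t : Set ℝ} (h : s =ᵐ[gaussianReal 0 1] t) :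
    gaussCondVar s = gaussCondVar t := by
  simp only [gaussCondVar, gaussCondMean, setIntegral_congr_set h, measure_congr h]

theorem gaussCondVar_Iic_neg (t : ℝ) : gaussCondVar (Iic (-t)) = gaussCondVar (Ioi t) := by
  have : NullSingletonClass (gaussianReal 0 1) := nullSingletonClass_gaussianReal one_ne_zero
  rw [← gaussCondVar_congr_ae Iio_ae_eq_Iic, ← neg_Ioi, gaussCondVar_neg]

namespace StdGaussian

open Real

local notation "φ" => gaussianPDFReal 0 1

theorem gaussianPDFReal_zero_one_apply (x : ℝ) : φ x = (√(2 * π))⁻¹ * exp (-x ^ 2 / 2) := by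
  simp [gaussianPDFReal]

theorem continuous_gaussianPDFReal_zero_one : Continuous φ := by
  simp only [show φ = _ from funext gaussianPDFReal_zero_one_apply]
  fun_prop

theorem hasDerivAt_gaussianPDFReal (x : ℝ) : HasDerivAt φ (-x * φ x) x := by
  rw [show φ = fun y ↦ (√(2 * π))⁻¹ * exp (-y ^ 2 / 2) from
    funext gaussianPDFReal_zero_one_apply]
  refine ((((hasDerivAt_pow 2 x).fun_neg).div_const 2).exp.const_mul _).congr_deriv ?_
  simp only [Nat.cast_ofNat]
  ring

theorem integrable_mul_gaussianPDFReal : Integrable fun x ↦ x * φ x := by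
  refine ((integrable_mul_exp_neg_mul_sq (b := 1 / 2) (by norm_num)).const_mul
    (√(2 * π))⁻¹).congr (ae_of_all _ fun x ↦ ?_)
  simp only [gaussianPDFReal_zero_one_apply, show -(1 / 2) * x ^ 2 = -x ^ 2 / 2 by ring]
  ring

theorem integrable_sq_mul_gaussianPDFReal : Integrable fun x ↦ x ^ 2 * φ x := by
  refine ((integrable_rpow_mul_exp_neg_mul_sq (b := 1 / 2) (s := 2) (by norm_num)
    (by norm_num)).const_mul (√(2 * π))⁻¹).congr (ae_of_all _ fun x ↦ ?_)
  simp only [gaussianPDFReal_zero_one_apply, rpow_two]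
  ring_nf

theorem tendsto_gaussianPDFReal_atTop : Tendsto φ atTop (𝓝 0) :=
  tendsto_zero_of_hasDerivAt_of_integrableOn_Ioi (a := 0)
    (fun x _ ↦ hasDerivAt_gaussianPDFReal x)
    (by simpa using integrable_mul_gaussianPDFReal.neg.integrableOn)
    (integrable_gaussianPDFReal 0 1).integrableOn

theorem setIntegral_Ioi_mul_gaussianPDFReal (t : ℝ) : ∫ x in Ioi t, x * φ x = φ t := by
  simpa using integral_Ioi_of_hasDerivAt_of_integrable (f := fun x ↦ -φ x)
    (fun x ↦ (hasDerivAt_gaussianPDFReal x).neg.congr_deriv (by ring))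
    integrable_mul_gaussianPDFReal (integrable_gaussianPDFReal 0 1).neg t

noncomputable def tail (t : ℝ) : ℝ := ∫ x in Ioi t, φ x

theorem tail_pos (t : ℝ) : 0 < tail t := by
  rw [tail, setIntegral_pos_iff_support_of_nonneg_ae
    (ae_of_all _ (gaussianPDFReal_nonneg 0 1)) (integrable_gaussianPDFReal 0 1).integrableOn]
  have : Function.support φ = univ :=
    Function.support_eq_univ fun x ↦ (gaussianPDFReal_pos 0 1 x one_ne_zero).ne'
  simp [this]

theorem hasDerivAt_tail (t : ℝ) : HasDerivAt tail (-φ t) t := by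
  have key : tail = fun u ↦ tail 0 - ∫ x in (0 : ℝ)..u, φ x := by
    funext u
    rw [← intervalIntegral.integral_Ioi_sub_Ioi' (integrable_gaussianPDFReal 0 1).integrableOn
      (integrable_gaussianPDFReal 0 1).integrableOn, tail, tail, sub_sub_cancel]
  rw [key]
  exact (intervalIntegral.integral_hasDerivAt_right
    (continuous_gaussianPDFReal_zero_one.intervalIntegrable _ _)
    (continuous_gaussianPDFReal_zero_one.stronglyMeasurableAtFilter _ _)
    continuous_gaussianPDFReal_zero_one.continuousAt).const_sub _

theorem setIntegral_Ioi_sq_mul_gaussianPDFReal (t : ℝ) :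
    ∫ x in Ioi t, x ^ 2 * φ x = t * φ t + tail t := by
  have h := integral_Ioi_of_hasDerivAt_of_integrable (f := fun x ↦ -(x * φ x))
    (f' := fun x ↦ x ^ 2 * φ x - φ x)
    (fun x ↦ ((hasDerivAt_id' x).fun_mul (hasDerivAt_gaussianPDFReal x)).neg.congr_deriv
      (by ring))
    (integrable_sq_mul_gaussianPDFReal.sub (integrable_gaussianPDFReal 0 1))
    integrable_mul_gaussianPDFReal.neg t
  rw [integral_sub integrable_sq_mul_gaussianPDFReal.integrableOn
    (integrable_gaussianPDFReal 0 1).integrableOn] at h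
  rw [tail]
  linarith

theorem mul_tail_le (t : ℝ) : t * tail t ≤ φ t := calc
  t * tail t = ∫ x in Ioi t, t * φ x := (integral_const_mul t _).symm
  _ ≤ ∫ x in Ioi t, x * φ x :=
    setIntegral_mono_on ((integrable_gaussianPDFReal 0 1).integrableOn.const_mul t)
      integrable_mul_gaussianPDFReal.integrableOn measurableSet_Ioi
      fun x hx ↦ mul_le_mul_of_nonneg_right (le_of_lt hx) (gaussianPDFReal_nonneg 0 1 x)
  _ = φ t := setIntegral_Ioi_mul_gaussianPDFReal t

theorem tendsto_mul_tail_atTop : Tendsto (fun t ↦ t * tail t) atTop (𝓝 0) :=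
  squeeze_zero' (eventually_ge_atTop 0 |>.mono fun t ht ↦ mul_nonneg ht (tail_pos t).le)
    (Eventually.of_forall mul_tail_le) tendsto_gaussianPDFReal_atTop

theorem tendsto_tail_atTop : Tendsto tail atTop (𝓝 0) :=
  squeeze_zero' (Eventually.of_forall fun t ↦ (tail_pos t).le)
    (eventually_ge_atTop 1 |>.mono fun t ht ↦ le_mul_of_one_le_left (tail_pos t).le ht)
    tendsto_mul_tail_atTop

/-- The paper's `m` at `ψ = -t`. -/
noncomputable def invMillsRatio (t : ℝ) : ℝ := φ t / tail t

theorem hasDerivAt_invMillsRatio (t : ℝ) :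
    HasDerivAt invMillsRatio (invMillsRatio t * (invMillsRatio t - t)) t := by
  have := (tail_pos t).ne'
  refine ((hasDerivAt_gaussianPDFReal t).div (hasDerivAt_tail t) this).congr_deriv ?_
  simp only [invMillsRatio]
  field_simp
  ring

theorem gaussCondVar_Ioi (t : ℝ) :
    gaussCondVar (Ioi t) = 1 - invMillsRatio t * (invMillsRatio t - t) := by
  have h (g : ℝ → ℝ) : ∫ x in Ioi t, g x ∂gaussianReal 0 1 = ∫ x in Ioi t, φ x * g x :=
    setIntegral_gaussianReal_eq_setIntegral_smul one_ne_zero _ g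
  have hmass : ((gaussianReal 0 1) (Ioi t)).toReal = tail t := by
    simpa [tail, ← measureReal_def] using h fun _ ↦ 1
  have hmean : ∫ x in Ioi t, x ∂gaussianReal 0 1 = φ t := by
    rw [h, ← setIntegral_Ioi_mul_gaussianPDFReal]; simp only [mul_comm]
  have hsq : ∫ x in Ioi t, x ^ 2 ∂gaussianReal 0 1 = t * φ t + tail t := by
    rw [h, ← setIntegral_Ioi_sq_mul_gaussianPDFReal]; simp only [mul_comm]
  have := (tail_pos t).ne'
  rw [gaussCondVar, gaussCondMean, hmass, hmean, hsq, invMillsRatio]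
  field_simp
  ring

theorem mul_add_three_lt_sqrt_mul (t : ℝ) : t * (t ^ 2 + 3) < √(t ^ 2 + 4) * (t ^ 2 + 1) := by
  have hq := sq_sqrt (show 0 ≤ t ^ 2 + 4 by positivity)
  have hq0 := sqrt_pos.2 (show 0 < t ^ 2 + 4 by positivity)
  rcases le_or_gt t 0 with ht | ht
  · nlinarith [sq_nonneg t]
  · refine lt_of_pow_lt_pow_left₀ 2 (by positivity) ?_
    rw [mul_pow, mul_pow, hq]
    nlinarith

theorem sqrt_sub_le_two {t : ℝ} (ht : 0 ≤ t) : √(t ^ 2 + 4) - t ≤ 2 := by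
  rw [sub_le_iff_le_add, sqrt_le_left (by linarith)]
  nlinarith

theorem gaussianPDFReal_mul_sqrt_sub_lt_tail (t : ℝ) :
    φ t * (√(t ^ 2 + 4) - t) / 2 < tail t := by
  set g : ℝ → ℝ := fun t ↦ tail t - φ t * (√(t ^ 2 + 4) - t) / 2
  have hderiv (t : ℝ) : HasDerivAt g
      (-(φ t * (√(t ^ 2 + 4) * (t ^ 2 + 1) - t * (t ^ 2 + 3)) / (2 * √(t ^ 2 + 4)))) t := by
    have hq : HasDerivAt (fun t ↦ √(t ^ 2 + 4)) (2 * t / (2 * √(t ^ 2 + 4))) t := by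
      simpa using ((hasDerivAt_pow 2 t).add_const 4).sqrt (by positivity)
    refine ((hasDerivAt_tail t).sub (((hasDerivAt_gaussianPDFReal t).mul
      (hq.fun_sub (hasDerivAt_id' t))).div_const 2)).congr_deriv ?_
    have := (sqrt_pos.2 (show 0 < t ^ 2 + 4 by positivity)).ne'
    field_simp
    linear_combination (φ t * t) * sq_sqrt (show 0 ≤ t ^ 2 + 4 by positivity)
  have hlim : Tendsto g atTop (𝓝 0) := by
    have h : Tendsto (fun t ↦ φ t * (√(t ^ 2 + 4) - t) / 2) atTop (𝓝 0) := by
      refine squeeze_zero' (Eventually.of_forall fun t ↦ ?_)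
        (eventually_ge_atTop 0 |>.mono fun t ht ↦ ?_) tendsto_gaussianPDFReal_atTop
      · have := sub_pos.2 (lt_sqrt_of_sq_lt (show t ^ 2 < t ^ 2 + 4 by linarith))
        have := gaussianPDFReal_nonneg 0 1 t
        positivity
      · nlinarith [gaussianPDFReal_nonneg 0 1 t, sqrt_sub_le_two ht]
    simpa using tendsto_tail_atTop.sub h
  refine sub_pos.1 ((strictAnti_of_hasDerivAt_neg hderiv fun t ↦ ?_).lt_of_tendsto_atTop hlim t)
  have := gaussianPDFReal_pos 0 1 t one_ne_zero
  have := sub_pos.2 (mul_add_three_lt_sqrt_mul t)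
  have := sqrt_pos.2 (show 0 < t ^ 2 + 4 by positivity)
  simp only [neg_lt_zero]
  positivity

theorem sqrt_mul_sqrt_lt (t : ℝ) : √(t ^ 2 + 8) * √(t ^ 2 + 4) < t ^ 2 + 6 := by
  rw [← sqrt_mul (by positivity), sqrt_lt' (by positivity)]
  nlinarith

theorem two_mul_sqrt_mul_sub_lt (t : ℝ) :
    2 * √(t ^ 2 + 8) * (√(t ^ 2 + 8) - t) < (3 * √(t ^ 2 + 8) + t) * (√(t ^ 2 + 4) - t) := by
  set s := √(t ^ 2 + 8)
  set q := √(t ^ 2 + 4)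
  have hs : s ^ 2 = t ^ 2 + 8 := sq_sqrt (by positivity)
  have hq : q ^ 2 = t ^ 2 + 4 := sq_sqrt (by positivity)
  have hst : 0 < s + t := by linarith [neg_sqrt_lt_of_sq_lt (show t ^ 2 < t ^ 2 + 8 by linarith)]
  have hqt : 0 < q + t := by linarith [neg_sqrt_lt_of_sq_lt (show t ^ 2 < t ^ 2 + 4 by linarith)]
  -- `(s - t) (s + t) = 8` and `(q - t) (q + t) = 4` clear the differences.
  have key : ((3 * s + t) * (q - t) - 2 * s * (s - t)) * ((s + t) * (q + t)) =
      16 * (t ^ 2 + 6 - s * q) := by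
    linear_combination (3 * s + t) * (s + t) * hq + (12 - 2 * s * (q + t)) * hs
  have := sqrt_mul_sqrt_lt t
  have : 0 < ((3 * s + t) * (q - t) - 2 * s * (s - t)) * ((s + t) * (q + t)) := by
    rw [key]; linarith
  linarith [pos_of_mul_pos_left this (by positivity)]

theorem gaussianPDFReal_mul_sqrt_sub_lt_mul_tail (t : ℝ) :
    φ t * (√(t ^ 2 + 8) - t) < (3 + t / √(t ^ 2 + 8)) * tail t := by
  have hs := sqrt_pos.2 (show 0 < t ^ 2 + 8 by positivity)
  have h3 : 0 < 3 * √(t ^ 2 + 8) + t := by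
    linarith [neg_sqrt_lt_of_sq_lt (show t ^ 2 < t ^ 2 + 8 by linarith)]
  have hφ := gaussianPDFReal_pos 0 1 t one_ne_zero
  calc φ t * (√(t ^ 2 + 8) - t)
      = φ t * (2 * √(t ^ 2 + 8) * (√(t ^ 2 + 8) - t)) / (2 * √(t ^ 2 + 8)) := by
        field_simp
    _ < φ t * ((3 * √(t ^ 2 + 8) + t) * (√(t ^ 2 + 4) - t)) / (2 * √(t ^ 2 + 8)) := by
        gcongr φ t * ?_ / _
        exact two_mul_sqrt_mul_sub_lt t
    _ = (3 + t / √(t ^ 2 + 8)) * (φ t * (√(t ^ 2 + 4) - t) / 2) := by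
        field_simp
    _ < (3 + t / √(t ^ 2 + 8)) * tail t := by
        have : 0 < 3 + t / √(t ^ 2 + 8) := by
          rw [show 3 + t / √(t ^ 2 + 8) = (3 * √(t ^ 2 + 8) + t) / √(t ^ 2 + 8) by field_simp]
          positivity
        gcongr
        exact gaussianPDFReal_mul_sqrt_sub_lt_tail t

theorem add_mul_tail_lt (t : ℝ) : (3 * t + √(t ^ 2 + 8)) * tail t < 4 * φ t := by
  set g : ℝ → ℝ := fun t ↦ 4 * φ t - (3 * t + √(t ^ 2 + 8)) * tail t
  have hderiv (t : ℝ) :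
      HasDerivAt g (φ t * (√(t ^ 2 + 8) - t) - (3 + t / √(t ^ 2 + 8)) * tail t) t := by
    have hs : HasDerivAt (fun t ↦ √(t ^ 2 + 8)) (2 * t / (2 * √(t ^ 2 + 8))) t := by
      simpa using ((hasDerivAt_pow 2 t).add_const 8).sqrt (by positivity)
    refine (((hasDerivAt_gaussianPDFReal t).const_mul 4).sub
      ((((hasDerivAt_id' t).const_mul 3).fun_add hs).mul (hasDerivAt_tail t))).congr_deriv ?_
    have := (sqrt_pos.2 (show 0 < t ^ 2 + 8 by positivity)).ne'
    field_simp
    ring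
  have hlim : Tendsto g atTop (𝓝 0) := by
    have hs : Tendsto (fun t ↦ √(t ^ 2 + 8) * tail t) atTop (𝓝 0) := by
      refine squeeze_zero' (Eventually.of_forall fun t ↦ by have := tail_pos t; positivity)
        (eventually_ge_atTop 0 |>.mono fun t ht ↦ ?_)
        (by simpa using tendsto_mul_tail_atTop.add (tendsto_tail_atTop.const_mul 3))
      have : √(t ^ 2 + 8) ≤ t + 3 := (sqrt_le_left (by linarith)).2 (by nlinarith)
      nlinarith [tail_pos t]
    have := (tendsto_gaussianPDFReal_atTop.const_mul 4).sub
      ((tendsto_mul_tail_atTop.const_mul 3).add hs)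
    simp only [mul_zero, add_zero, sub_zero] at this
    exact this.congr fun t ↦ by ring
  refine sub_pos.1 ((strictAnti_of_hasDerivAt_neg hderiv fun t ↦ ?_).lt_of_tendsto_atTop hlim t)
  linarith [gaussianPDFReal_mul_sqrt_sub_lt_mul_tail t]

theorem add_sqrt_div_four_lt_invMillsRatio (t : ℝ) :
    (3 * t + √(t ^ 2 + 8)) / 4 < invMillsRatio t := by
  rw [invMillsRatio, div_lt_div_iff₀ four_pos (tail_pos t)]
  linarith [add_mul_tail_lt t]

theorem strictAnti_gaussCondVar_Ioi : StrictAnti fun t ↦ gaussCondVar (Ioi t) := by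
  simp only [gaussCondVar_Ioi]
  refine strictAnti_of_hasDerivAt_neg
    (f' := fun t ↦
      -(invMillsRatio t * (2 * invMillsRatio t ^ 2 - 3 * t * invMillsRatio t + t ^ 2 - 1)))
    (fun t ↦ ?_) fun t ↦ ?_
  · have hm := hasDerivAt_invMillsRatio t
    exact ((hm.mul (hm.fun_sub (hasDerivAt_id' t))).const_sub 1).congr_deriv (by ring)
  · have hm := add_sqrt_div_four_lt_invMillsRatio t
    have hs : √(t ^ 2 + 8) ^ 2 = t ^ 2 + 8 := sq_sqrt (by positivity)
    have hs0 := sqrt_pos.2 (show 0 < t ^ 2 + 8 by positivity)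
    have hpos : 0 < invMillsRatio t := div_pos (gaussianPDFReal_pos 0 1 t one_ne_zero) (tail_pos t)
    have key : 2 * invMillsRatio t ^ 2 - 3 * t * invMillsRatio t + t ^ 2 - 1 =
        2 * (invMillsRatio t - (3 * t + √(t ^ 2 + 8)) / 4) *
          (invMillsRatio t - (3 * t - √(t ^ 2 + 8)) / 4) := by
      linear_combination (1 / 8) * hs
    rw [key, neg_lt_zero]
    have : 0 < invMillsRatio t - (3 * t + √(t ^ 2 + 8)) / 4 := by linarith
    have : 0 < invMillsRatio t - (3 * t - √(t ^ 2 + 8)) / 4 := by linarith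
    positivity

end StdGaussian

/-- Var(ε | ε > −ψ) is strictly increasing in ψ; by symmetry
Var(ε | ε ≤ −ψ) = Var(ε | ε > ψ); hence D(ψ) = Var(ε | ε > −ψ) − Var(ε | ε ≤ −ψ)
satisfies D(0) = 0, D(ψ) > 0 for ψ > 0 and D(ψ) < 0 for ψ < 0. -/
theorem trunc_var_monotone_and_difference_sign :
    StrictMono (fun ψ : ℝ => gaussCondVar (Set.Ioi (-ψ))) ∧
    (∀ ψ : ℝ, gaussCondVar (Set.Iic (-ψ)) = gaussCondVar (Set.Ioi ψ)) ∧
    (gaussCondVar (Set.Ioi (-(0 : ℝ))) - gaussCondVar (Set.Iic (-(0 : ℝ))) = 0) ∧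
    (∀ ψ : ℝ, 0 < ψ → 0 < gaussCondVar (Set.Ioi (-ψ)) - gaussCondVar (Set.Iic (-ψ))) ∧
    (∀ ψ : ℝ, ψ < 0 → gaussCondVar (Set.Ioi (-ψ)) - gaussCondVar (Set.Iic (-ψ)) < 0) := by
  have hanti := StdGaussian.strictAnti_gaussCondVar_Ioi
  refine ⟨fun a b hab ↦ hanti (neg_lt_neg hab), gaussCondVar_Iic_neg, ?_, fun ψ hψ ↦ ?_,
    fun ψ hψ ↦ ?_⟩
  · rw [gaussCondVar_Iic_neg, neg_zero, sub_self]
  · rw [gaussCondVar_Iic_neg, sub_pos]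
    exact hanti (by linarith)
  · rw [gaussCondVar_Iic_neg, sub_neg]
    exact hanti (by linarith)
end

section
/- In the logistic nudge model with δ > 0, the baseline score θ(μ) = σ(μ) (probability of the desired choice without a nudge) is strictly increasing in μ, and the CATE β(μ) = σ(μ+δ) − σ(μ) is strictly increasing on (−∞, −δ/2). Hence, if all individuals in a population have latent means μ(x) < −δ/2, the score θ has a valid effect ordering interpretation with respect to β: θ(μ(x_i)) > θ(μ(x_j)) if and only if β(μ(x_i)) > β(μ(x_j)). -/
/-!
With `K = e^δ`, the CATE is `β(μ) = (K - 1) / (2 √K cosh (μ + δ/2) + K + 1)`, a decreasing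
function of `cosh (μ + δ/2)`, so it increases exactly where `μ + δ/2 < 0`. On that half-line both
`θ` and `β` are strictly increasing, so both order the individuals as their latent means do.
-/

noncomputable def sigm (z : ℝ) : ℝ := 1 / (1 + Real.exp (-z))

open Real Set

lemma sigm_eq_sigmoid : sigm = sigmoid := by
  funext z
  rw [sigm, sigmoid_def, one_div]

/-- Dividing numerator and denominator of `σ(μ + δ) - σ(μ)` by `e^μ` leaves
`e^{μ+δ} + e^{-μ} = 2 e^{δ/2} cosh (μ + δ/2)` in the denominator. -/
lemma sigmoid_add_sub_sigmoid_eq_div_cosh (μ δ : ℝ) :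
    sigmoid (μ + δ) - sigmoid μ =
      (exp δ - 1) / (2 * exp (δ / 2) * cosh (μ + δ / 2) + exp δ + 1) := by
  have hcosh : 2 * exp (δ / 2) * cosh (μ + δ / 2) = exp (μ + δ) + exp (-μ) := by
    have h₁ : exp (δ / 2) * exp (μ + δ / 2) = exp (μ + δ) := by rw [← exp_add]; ring_nf
    have h₂ : exp (δ / 2) * exp (-(μ + δ / 2)) = exp (-μ) := by rw [← exp_add]; ring_nf
    rw [cosh_eq]
    linear_combination h₁ + h₂
  rw [hcosh, sigmoid_def, sigmoid_def, exp_neg, exp_neg, exp_add]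
  have := exp_pos μ
  have := exp_pos δ
  field_simp
  ring

lemma strictMonoOn_sigmoid_add_sub_sigmoid {δ : ℝ} (hδ : 0 < δ) :
    StrictMonoOn (fun μ ↦ sigmoid (μ + δ) - sigmoid μ) (Iio (-δ / 2)) := by
  intro a ha b hb hab
  simp only [sigmoid_add_sub_sigmoid_eq_div_cosh]
  have hnum : 0 < exp δ - 1 := by linarith [add_one_lt_exp hδ.ne']
  have hcosh : cosh (b + δ / 2) < cosh (a + δ / 2) := by
    rw [cosh_lt_cosh, abs_of_neg (by linarith [mem_Iio.1 hb]),
      abs_of_neg (by linarith [mem_Iio.1 ha])]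
    linarith
  apply div_lt_div_of_pos_left hnum (by positivity)
  gcongr

/-- the baseline score θ = σ is strictly increasing, the CATE
β(μ) = σ(μ+δ) − σ(μ) is strictly increasing on (−∞, −δ/2), and hence if all latent
means satisfy μ(x) < −δ/2, the baseline score has a valid effect ordering
interpretation with respect to the CATE. -/
theorem baseline_score_eo_below_threshold {X : Type*} (δ : ℝ) (hδ : 0 < δ)
    (θ β : ℝ → ℝ) (hθ : ∀ z, θ z = sigm z)
    (hβ : ∀ μ, β μ = sigm (μ + δ) - sigm μ)
    (μf : X → ℝ) (hμ : ∀ x, μf x < -δ / 2) :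
    StrictMono θ ∧
    StrictMonoOn β (Set.Iio (-δ / 2)) ∧
    (∀ xi xj : X, θ (μf xi) > θ (μf xj) ↔ β (μf xi) > β (μf xj)) := by
  obtain rfl : θ = sigmoid := funext fun z ↦ by rw [hθ, sigm_eq_sigmoid]
  obtain rfl : β = fun μ ↦ sigmoid (μ + δ) - sigmoid μ :=
    funext fun μ ↦ by rw [hβ, sigm_eq_sigmoid]
  have hβmono := strictMonoOn_sigmoid_add_sub_sigmoid hδ
  refine ⟨sigmoid_strictMono, hβmono, fun xi xj ↦ ?_⟩
  exact sigmoid_lt_iff.trans (hβmono.lt_iff_lt (hμ xj) (hμ xi)).symm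
end

section
/- Let T = 1{U > 0} with U = ψ(X) + ε_u, ε_u independent of X, and let Y^0 = ζ(X) + ε_y, C = β(X) + ε_c with E[ε_y | ε_u] = α_y ε_u and E[ε_c | ε_u] = α_c ε_u (both independent of X given ε_u). Then the confounded score θ(x) = E[Y | T=1, X=x] − E[Y | T=0, X=x], where Y = Y^0 + T·C, decomposes as θ(x) = β(x) + α_c E[ε_u | ε_u > −ψ(x)] + α_y (E[ε_u | ε_u > −ψ(x)] − E[ε_u | ε_u ≤ −ψ(x)]). -/
/-!
Conditioning on the event `{ε_u > -ψ}` (or its complement) is conditioning on an event measurable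
with respect to `σ(ε_u)`, so by the defining property of conditional expectation the mean of `ε_y`
(resp. `ε_c`) over that event equals the mean of `α_y ε_u` (resp. `α_c ε_u`). On the treated event
`Y = ζ + β + ε_y + ε_c` and on the untreated one `Y = ζ + ε_y`; subtracting the two means leaves
the stated decomposition.
-/

open MeasureTheory ProbabilityTheory

namespace ProbabilityTheory

variable {Ω : Type*} {m m₀ : MeasurableSpace Ω} {μ : Measure Ω} {s : Set Ω}

lemma integral_cond_eq_setIntegral_div (f : Ω → ℝ) :
    ∫ ω, f ω ∂μ[|s] = (∫ ω in s, f ω ∂μ) / (μ s).toReal := by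
  rw [cond, integral_smul_measure, ENNReal.toReal_inv, smul_eq_mul, inv_mul_eq_div]

lemma _root_.MeasureTheory.Integrable.cond {f : Ω → ℝ} (hf : Integrable f μ) (hs : μ s ≠ 0) :
    Integrable f μ[|s] :=
  hf.restrict.smul_measure (ENNReal.inv_ne_top.2 hs)

lemma integral_cond_eq_of_condExp_ae_eq (hm : m ≤ m₀) [SigmaFinite (μ.trim hm)]
    {f g : Ω → ℝ} (hf : Integrable f μ) (hfg : μ[f|m] =ᵐ[μ] g) (hs : MeasurableSet[m] s) :
    ∫ ω, f ω ∂μ[|s] = ∫ ω, g ω ∂μ[|s] := by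
  rw [integral_cond_eq_setIntegral_div, integral_cond_eq_setIntegral_div,
    ← setIntegral_condExp hm hf hs, integral_congr_ae (ae_restrict_of_ae hfg)]

lemma integral_cond_const_add [IsFiniteMeasure μ] (hs : μ s ≠ 0) (c : ℝ) {f : Ω → ℝ}
    (hf : Integrable f μ) : ∫ ω, c + f ω ∂μ[|s] = c + ∫ ω, f ω ∂μ[|s] := by
  have := cond_isProbabilityMeasure hs
  rw [integral_add (integrable_const c) (hf.cond hs), integral_const, probReal_univ, one_smul]

end ProbabilityTheory

theorem confounded_score_decomposition_general
    {Ω : Type*} [MeasurableSpace Ω] (P : Measure Ω) [IsProbabilityMeasure P]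
    (epsu epsy epsc : Ω → ℝ) (hmu : Measurable epsu)
    (hinty : Integrable epsy P) (hintc : Integrable epsc P)
    (αy αc : ℝ)
    (hcy : P[epsy | MeasurableSpace.comap epsu inferInstance] =ᵐ[P] fun ω => αy * epsu ω)
    (hcc : P[epsc | MeasurableSpace.comap epsu inferInstance] =ᵐ[P] fun ω => αc * epsu ω)
    (ζx βx ψx : ℝ)
    (hpos1 : 0 < P {ω | epsu ω > -ψx}) (hpos2 : 0 < P {ω | epsu ω ≤ -ψx})
    (Y : Ω → ℝ)
    (hY : ∀ ω, Y ω = (ζx + epsy ω) + (if epsu ω > -ψx then 1 else 0) * (βx + epsc ω)) :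
    (∫ ω in {ω | epsu ω > -ψx}, Y ω ∂P) / (P {ω | epsu ω > -ψx}).toReal -
      (∫ ω in {ω | epsu ω ≤ -ψx}, Y ω ∂P) / (P {ω | epsu ω ≤ -ψx}).toReal =
    βx + αc * ((∫ ω in {ω | epsu ω > -ψx}, epsu ω ∂P) / (P {ω | epsu ω > -ψx}).toReal) +
      αy * ((∫ ω in {ω | epsu ω > -ψx}, epsu ω ∂P) / (P {ω | epsu ω > -ψx}).toReal -
        (∫ ω in {ω | epsu ω ≤ -ψx}, epsu ω ∂P) / (P {ω | epsu ω ≤ -ψx}).toReal) := by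
  have hm := hmu.comap_le
  set A := {ω | epsu ω > -ψx}
  set B := {ω | epsu ω ≤ -ψx}
  have hA : MeasurableSet[MeasurableSpace.comap epsu inferInstance] A :=
    comap_measurable epsu measurableSet_Ioi
  have hB : MeasurableSet[MeasurableSpace.comap epsu inferInstance] B :=
    comap_measurable epsu measurableSet_Iic
  simp only [← integral_cond_eq_setIntegral_div]
  have hYA : ∫ ω, Y ω ∂P[|A] =
      ζx + βx + (αy * ∫ ω, epsu ω ∂P[|A] + αc * ∫ ω, epsu ω ∂P[|A]) := by
    have hY_on_A : ∀ᵐ ω ∂P[|A], Y ω = ζx + βx + (epsy + epsc) ω :=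
      ae_cond_of_forall_mem (hm _ hA) fun ω (hω : epsu ω > -ψx) => by
        rw [hY, if_pos hω, Pi.add_apply]
        ring
    rw [integral_congr_ae hY_on_A, integral_cond_const_add hpos1.ne' _ (hinty.add hintc),
      integral_add' (hinty.cond hpos1.ne') (hintc.cond hpos1.ne'),
      integral_cond_eq_of_condExp_ae_eq hm hinty hcy hA,
      integral_cond_eq_of_condExp_ae_eq hm hintc hcc hA, integral_const_mul, integral_const_mul]
  have hYB : ∫ ω, Y ω ∂P[|B] = ζx + αy * ∫ ω, epsu ω ∂P[|B] := by
    have hY_on_B : ∀ᵐ ω ∂P[|B], Y ω = ζx + epsy ω :=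
      ae_cond_of_forall_mem (hm _ hB) fun ω (hω : epsu ω ≤ -ψx) => by
        rw [hY, if_neg hω.not_gt]
        ring
    rw [integral_congr_ae hY_on_B, integral_cond_const_add hpos2.ne' _ hinty,
      integral_cond_eq_of_condExp_ae_eq hm hinty hcy hB, integral_const_mul]
  rw [hYA, hYB]
  ring

/-- decomposition of the confounded score (conditional on X = x, with
baseline ζ(x), effect β(x), utility index ψ(x)): with T = 1{ε_u > −ψ(x)},
Y = Y⁰ + T·C, E[ε_y | ε_u] = α_y ε_u and E[ε_c | ε_u] = α_c ε_u,
θ(x) = β(x) + α_c E[ε_u | ε_u > −ψ(x)] + α_y (E[ε_u | ε_u > −ψ(x)] − E[ε_u | ε_u ≤ −ψ(x)]). -/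
theorem confounded_score_decomposition
    {Ω : Type*} [MeasurableSpace Ω] (P : Measure Ω) [IsProbabilityMeasure P]
    (epsu epsy epsc : Ω → ℝ) (hmu : Measurable epsu)
    (hintu : Integrable epsu P) (hinty : Integrable epsy P) (hintc : Integrable epsc P)
    (αy αc : ℝ)
    (hcy : P[epsy | MeasurableSpace.comap epsu inferInstance] =ᵐ[P] fun ω => αy * epsu ω)
    (hcc : P[epsc | MeasurableSpace.comap epsu inferInstance] =ᵐ[P] fun ω => αc * epsu ω)
    (ζx βx ψx : ℝ)
    (hpos1 : 0 < P {ω | epsu ω > -ψx}) (hpos2 : 0 < P {ω | epsu ω ≤ -ψx})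
    (Y : Ω → ℝ)
    (hY : ∀ ω, Y ω = (ζx + epsy ω) + (if epsu ω > -ψx then 1 else 0) * (βx + epsc ω)) :
    (∫ ω in {ω | epsu ω > -ψx}, Y ω ∂P) / (P {ω | epsu ω > -ψx}).toReal -
      (∫ ω in {ω | epsu ω ≤ -ψx}, Y ω ∂P) / (P {ω | epsu ω ≤ -ψx}).toReal =
    βx + αc * ((∫ ω in {ω | epsu ω > -ψx}, epsu ω ∂P) / (P {ω | epsu ω > -ψx}).toReal) +
      αy * ((∫ ω in {ω | epsu ω > -ψx}, epsu ω ∂P) / (P {ω | epsu ω > -ψx}).toReal -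
        (∫ ω in {ω | epsu ω ≤ -ψx}, epsu ω ∂P) / (P {ω | epsu ω ≤ -ψx}).toReal) :=
  confounded_score_decomposition_general P epsu epsy epsc hmu hinty hintc αy αc hcy hcc ζx βx ψx
    hpos1 hpos2 Y hY
end
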